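/- Let (A, m) be a Noetherian local ring, ℓ ≥ 1, and suppose there exists x ∈ m with (m^{ℓ+1} : x) = m^ℓ. Let J be an ideal with J ⊇ m^ℓ. Then μ(J) ≤ μ(m^ℓ), and equality holds if and only if mJ = xJ + m^{ℓ+1}. -/

import Mathlib

open IsLocalRing

/-- `mu I` is the minimal number of generators of the ideal `I`. -/
noncomputable def mu {A : Type*} [CommRing A] (I : Ideal A) : ℕ :=
  sInf {n | ∃ s : Finset A, s.card = n ∧ Ideal.span (s : Set A) = I}

/-!
Write `q = m^{ℓ+1}` and `K = xJ + q`, and measure subquotients of `J/q` by their length, which is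
finite because `A/m^ℓ` has finite length. By Nakayama, `μ(N) = ℓ(N/mN)`. Multiplication by `x`
maps `J` onto `K/q` with kernel `J ∩ (q : x) = m^ℓ`, so `ℓ(J/m^ℓ) = ℓ(K/q)`. Computing `ℓ(J/q)`
along `q ⊆ K ⊆ mJ ⊆ J` and along `q ⊆ m^ℓ ⊆ J` then gives `μ(J) + ℓ(mJ/K) = μ(m^ℓ)`, and
`ℓ(mJ/K) = 0` exactly when `mJ = K`.
-/

namespace Submodule

variable {R M : Type*} [Ring R] [AddCommGroup M] [Module R M]

noncomputable def subquotientLength (P N : Submodule R M) : ℕ∞ :=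
  Module.length R (P ⧸ N.comap P.subtype)

theorem subquotientLength_eq_zero_iff {P N : Submodule R M} :
    P.subquotientLength N = 0 ↔ P ≤ N := by
  rw [subquotientLength, Module.length_eq_zero_iff, Quotient.subsingleton_iff,
    comap_subtype_eq_top]

theorem subquotientLength_eq_add {P N₁ N₂ : Submodule R M} (h₁ : N₁ ≤ N₂) (h₂ : N₂ ≤ P) :
    P.subquotientLength N₁ = N₂.subquotientLength N₁ + P.subquotientLength N₂ := by
  have hN : comap (inclusion h₂) (comap P.subtype N₁) = comap N₂.subtype N₁ := by
    rw [← comap_comp, subtype_comp_inclusion]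
  refine Module.length_eq_add_of_exact (mapQ _ _ (inclusion h₂) hN.ge)
    (factor (comap_mono h₁)) ?_ (factor_surjective _) ?_
  · rw [← LinearMap.ker_eq_bot, ker_mapQ, hN, mkQ_map_self]
  · rw [LinearMap.exact_iff, ker_mapQ, range_mapQ, range_inclusion, comap_id]

theorem subquotientLength_comap {M' : Type*} [AddCommGroup M'] [Module R M'] (f : M →ₗ[R] M')
    (P : Submodule R M) (N : Submodule R M') :
    P.subquotientLength (N.comap f) = (P.map f ⊔ N).subquotientLength N := by
  let g : P →ₗ[R] ↥(P.map f ⊔ N) ⧸ N.comap (P.map f ⊔ N).subtype :=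
    mkQ _ ∘ₗ (f.restrict fun z hz => mem_sup_left (mem_map_of_mem hz))
  have hg : Function.Surjective g := by
    rintro ⟨⟨y, hy⟩⟩
    obtain ⟨_, ⟨z, hz, rfl⟩, n, hn, rfl⟩ := mem_sup.mp hy
    refine ⟨⟨z, hz⟩, (Quotient.eq _).mpr ?_⟩
    simpa using neg_mem hn
  have hker : LinearMap.ker g = (N.comap f).comap P.subtype := by
    ext z
    simp [g]
  exact ((quotEquivOfEq _ _ hker.symm).trans (g.quotKerEquivOfSurjective hg)).length_eq

end Submodule

open Submodule

theorem IsLocalRing.spanFinrank_eq_subquotientLength {R M : Type*} [CommRing R] [IsLocalRing R]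
    [AddCommGroup M] [Module R M] {N : Submodule R M} (hN : N.FG) :
    (N.spanFinrank : ℕ∞) = N.subquotientLength (maximalIdeal R • N) := by
  have : Module.Finite R N := Module.Finite.iff_fg.mpr hN
  let : Field (R ⧸ maximalIdeal R) := Ideal.Quotient.field _
  have hsmul : maximalIdeal R • (⊤ : Submodule R N) = (maximalIdeal R • N).comap N.subtype := by
    rw [← comap_map_eq_of_injective N.injective_subtype (_ • ⊤), map_smul'', map_subtype_top]
  rw [spanFinrank_eq_finrank_quotient N hN, ← Module.length_eq_finrank,
    ← Module.length_eq_of_surjective (S := R) Ideal.Quotient.mk_surjective, subquotientLength]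
  exact (quotEquivOfEq _ _ hsmul).length_eq

section CommRing

variable {R : Type*} [CommRing R]

theorem mu_eq_spanFinrank (I : Ideal R) : mu I = I.spanFinrank := by
  rw [spanFinrank_eq_iInf, mu, iInf, Set.range]
  congr 1
  ext n
  simp only [Set.mem_ofPred_eq, Subtype.exists]
  exact ⟨fun ⟨s, hn, hs⟩ => ⟨s, hs, hn⟩, fun ⟨s, hs, hn⟩ => ⟨s, hn, hs⟩⟩

theorem subquotientLength_colon_span_singleton (x : R) (J q : Ideal R) :
    J.subquotientLength (q.colon (Ideal.span {x})) =
      (Ideal.span {x} * J ⊔ q).subquotientLength q := by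
  have hcomap : comap (LinearMap.mulLeft R x) q = q.colon (Ideal.span {x}) := by
    ext a
    simp [mul_comm]
  have hmap : map (LinearMap.mulLeft R x) J = Ideal.span {x} * J := by
    ext a
    simp [Ideal.mem_span_singleton_mul]
  rw [← hcomap, subquotientLength_comap, hmap]

theorem span_singleton_mul_sup_pow_succ_le {ℓ : ℕ} {x : R} {m J : Ideal R} (hx : x ∈ m)
    (hJ : m ^ ℓ ≤ J) : Ideal.span {x} * J ⊔ m ^ (ℓ + 1) ≤ m * J :=
  sup_le (Ideal.mul_mono_left ((Ideal.span_singleton_le_iff_mem _).mpr hx))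
    (pow_succ' m ℓ ▸ Ideal.mul_mono_right hJ)

end CommRing

section Noetherian

variable {R : Type*} [CommRing R] [IsNoetherianRing R] [IsLocalRing R]

theorem mu_eq_subquotientLength (I : Ideal R) :
    (mu I : ℕ∞) = I.subquotientLength (maximalIdeal R * I) := by
  rw [mu_eq_spanFinrank, IsLocalRing.spanFinrank_eq_subquotientLength I.fg_of_isNoetherianRing,
    Ideal.smul_eq_mul]

variable (R) in
theorem subquotientLength_top_maximalIdeal_pow_ne_top (n : ℕ) :
    (⊤ : Ideal R).subquotientLength (maximalIdeal R ^ n) ≠ ⊤ := by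
  induction n with
  | zero => simp [subquotientLength_eq_zero_iff.mpr]
  | succ n ih =>
    rw [subquotientLength_eq_add (Ideal.pow_le_pow_right n.le_succ) le_top, pow_succ',
      ← mu_eq_subquotientLength]
    exact WithTop.add_ne_top.mpr ⟨ENat.natCast_ne_top _, ih⟩

theorem mu_add_subquotientLength_eq_mu_pow {ℓ : ℕ} {x : R} (hx : x ∈ maximalIdeal R)
    (hcolon : (maximalIdeal R ^ (ℓ + 1)).colon (Ideal.span {x}) = maximalIdeal R ^ ℓ)
    {J : Ideal R} (hJ : maximalIdeal R ^ ℓ ≤ J) :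
    (mu J : ℕ∞) + (maximalIdeal R * J).subquotientLength
      (Ideal.span {x} * J ⊔ maximalIdeal R ^ (ℓ + 1)) = mu (maximalIdeal R ^ ℓ) := by
  set m := maximalIdeal R
  set q := m ^ (ℓ + 1)
  set K := Ideal.span {x} * J ⊔ q
  have hq : q = m * m ^ ℓ := pow_succ' m ℓ
  have hKmJ : K ≤ m * J := span_singleton_mul_sup_pow_succ_le hx hJ
  have hJK : J.subquotientLength (m ^ ℓ) = K.subquotientLength q := by
    rw [← hcolon, subquotientLength_colon_span_singleton]
  have hfin : K.subquotientLength q ≠ ⊤ := by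
    refine ne_top_of_le_ne_top (subquotientLength_top_maximalIdeal_pow_ne_top R ℓ) ?_
    rw [← hJK, subquotientLength_eq_add hJ le_top]
    exact le_self_add
  have hJq₁ : J.subquotientLength q =
      mu J + (m * J).subquotientLength K + K.subquotientLength q := by
    rw [subquotientLength_eq_add (le_sup_right.trans hKmJ) Ideal.mul_le_right,
      subquotientLength_eq_add le_sup_right hKmJ, mu_eq_subquotientLength]
    ac_rfl
  have hJq₂ : J.subquotientLength q = mu (m ^ ℓ) + K.subquotientLength q := by
    rw [subquotientLength_eq_add (hq ▸ Ideal.mul_le_right) hJ, mu_eq_subquotientLength, ← hq, hJK,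
      add_comm]
  exact WithTop.add_right_cancel hfin (hJq₁.symm.trans hJq₂)

end Noetherian

theorem stmt7_general {A : Type*} [CommRing A] [IsNoetherianRing A] [IsLocalRing A]
    (ℓ : ℕ) (x : A) (hx : x ∈ maximalIdeal A)
    (hcolon : (maximalIdeal A ^ (ℓ + 1)).colon (Ideal.span {x}) = maximalIdeal A ^ ℓ)
    (J : Ideal A) (hJ : maximalIdeal A ^ ℓ ≤ J) :
    mu J ≤ mu (maximalIdeal A ^ ℓ) ∧
    (mu J = mu (maximalIdeal A ^ ℓ) ↔
      maximalIdeal A * J = Ideal.span {x} * J ⊔ maximalIdeal A ^ (ℓ + 1)) := by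
  have key := mu_add_subquotientLength_eq_mu_pow hx hcolon hJ
  refine ⟨by exact_mod_cast key ▸ le_self_add, ?_⟩
  rw [← Nat.cast_inj (R := ℕ∞), ← key, eq_comm]
  nth_rw 2 [← add_zero (mu J : ℕ∞)]
  rw [(ENat.add_right_injective_of_ne_top (ENat.natCast_ne_top _)).eq_iff,
    subquotientLength_eq_zero_iff]
  exact ⟨fun h => le_antisymm h (span_singleton_mul_sup_pow_succ_le hx hJ), le_of_eq⟩

/-- If `(m^{ℓ+1} : x) = m^ℓ` for some `x ∈ m`, then every ideal `J ⊇ m^ℓ` satisfies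
`μ(J) ≤ μ(m^ℓ)`, with equality iff `mJ = xJ + m^{ℓ+1}`. -/
theorem stmt7 {A : Type*} [CommRing A] [IsNoetherianRing A] [IsLocalRing A]
    (ℓ : ℕ) (hℓ : 1 ≤ ℓ) (x : A) (hx : x ∈ maximalIdeal A)
    (hcolon : (maximalIdeal A ^ (ℓ + 1)).colon (Ideal.span {x}) = maximalIdeal A ^ ℓ)
    (J : Ideal A) (hJ : maximalIdeal A ^ ℓ ≤ J) :
    mu J ≤ mu (maximalIdeal A ^ ℓ) ∧
    (mu J = mu (maximalIdeal A ^ ℓ) ↔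
      maximalIdeal A * J = Ideal.span {x} * J ⊔ maximalIdeal A ^ (ℓ + 1)) :=
  stmt7_general ℓ x hx hcolon J hJ
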